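/- arXiv:1710.03653 — 4 statements merged into one kernel-verified Lean document; each statement's English description precedes it below -/
import Mathlib

section
/- Let B : [−1,1] → ℝ be continuous and Z(v) = ∫_{S²} B(ω·v/|v|) (P_ω^⊥ v) ⊗ (P_ω v) dω. Then Z(v) = b [ v⊗v − (|v|²/3) I ] for all v ≠ 0, where b = 3π ∫_{−1}^{1} B(x) x²(1−x²) dx. -/
open scoped RealInnerProductSpace
open MeasureTheory Matrix

noncomputable section

/-- `ℝ³` as a Euclidean space. -/
abbrev E3 : Type := EuclideanSpace ℝ (Fin 3)

/-- Surface measure on the unit sphere of `ℝ³`. -/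
noncomputable def sphereMeasure : Measure (Metric.sphere (0 : E3) 1) :=
  (volume : Measure E3).toSphere

/-- Projection onto `span {ω}`. -/
noncomputable def Pω (ω v : E3) : E3 := ⟪v, ω⟫ • ω

/-- Projection onto the orthogonal complement of `ω`. -/
noncomputable def Pperp (ω v : E3) : E3 := v - ⟪v, ω⟫ • ω

/-- The matrix-valued integral `Z(v) = ∫_{S²} B(ω·v/|v|) (P_ω^⊥ v) ⊗ (P_ω v) dω`. -/
noncomputable def Zmat (B : ℝ → ℝ) (v : E3) : Matrix (Fin 3) (Fin 3) ℝ :=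
  Matrix.of fun i j =>
    ∫ ω : Metric.sphere (0 : E3) 1,
      B (⟪(ω : E3), v⟫ / ‖v‖) * (Pperp (ω : E3) v i * Pω (ω : E3) v j)
      ∂sphereMeasure

namespace Stmt7Aux

open Metric Set Real intervalIntegral

/-! ### Coordinate vectors -/

def V3 (a b z : ℝ) : E3 := (WithLp.equiv 2 (Fin 3 → ℝ)).symm ![a, b, z]

@[simp] lemma V3_apply0 (a b z : ℝ) : V3 a b z 0 = a := rfl
@[simp] lemma V3_apply1 (a b z : ℝ) : V3 a b z 1 = b := rfl
@[simp] lemma V3_apply2 (a b z : ℝ) : V3 a b z 2 = z := rfl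

lemma norm_V3 (a b z : ℝ) : ‖V3 a b z‖ = Real.sqrt (a^2 + b^2 + z^2) := by
  rw [EuclideanSpace.norm_eq]
  congr 1
  simp [Fin.sum_univ_three, sq_abs]

lemma smul_V3 (r a b z : ℝ) : r • V3 a b z = V3 (r*a) (r*b) (r*z) := by
  ext i
  fin_cases i <;> rfl

lemma continuous_V3 : Continuous (fun p : ℝ × ℝ × ℝ => V3 p.1 p.2.1 p.2.2) := by
  have h : Continuous (fun p : ℝ × ℝ × ℝ => (![p.1, p.2.1, p.2.2] : Fin 3 → ℝ)) := by
    refine continuous_pi fun i => ?_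
    fin_cases i
    · exact continuous_fst
    · exact continuous_fst.comp continuous_snd
    · exact continuous_snd.comp continuous_snd
  exact (PiLp.continuous_toLp 2 (fun _ : Fin 3 => ℝ)).comp h

def sphv (θ φ : ℝ) : E3 :=
  V3 (Real.sin φ * Real.cos θ) (Real.sin φ * Real.sin θ) (Real.cos φ)

lemma norm_sphv (θ φ : ℝ) : ‖sphv θ φ‖ = 1 := by
  rw [sphv, norm_V3]
  have : (Real.sin φ * Real.cos θ)^2 + (Real.sin φ * Real.sin θ)^2 + Real.cos φ^2 = 1 := by
    have h1 := Real.sin_sq_add_cos_sq θ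
    have h2 := Real.sin_sq_add_cos_sq φ
    nlinarith [h1, h2]
  rw [this, Real.sqrt_one]

lemma finrank_E3 : Module.finrank ℝ E3 = 3 := finrank_euclideanSpace_fin

instance : IsFiniteMeasure sphereMeasure := by
  unfold sphereMeasure; infer_instance

instance : SFinite sphereMeasure := by
  unfold sphereMeasure; infer_instance

/-! ### Polar decomposition of the volume integral -/

lemma polar_integral (g : E3 → ℝ) :
    ∫ x, g x = ∫ p : Metric.sphere (0:E3) 1 × Set.Ioi (0:ℝ),
        g ((p.2 : ℝ) • (p.1 : E3)) ∂(sphereMeasure.prod (Measure.volumeIoiPow 2)) := by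
  have h2 : Module.finrank ℝ E3 - 1 = 2 := by rw [finrank_E3]
  have step1 : ∫ x, g x ∂(volume : Measure E3)
      = ∫ x : ({0}ᶜ : Set E3), g x.1 ∂((volume : Measure E3).comap (↑)) := by
    rw [integral_subtype_comap (measurableSet_singleton _).compl fun x => g x,
      MeasureTheory.restrict_compl_singleton]
  have step2 := (volume : Measure E3).measurePreserving_homeomorphUnitSphereProd.integral_comp
      (Homeomorph.measurableEmbedding _)
      (fun p : Metric.sphere (0:E3) 1 × Set.Ioi (0:ℝ) => g ((p.2 : ℝ) • (p.1 : E3)))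
  rw [h2] at step2
  refine step1.trans (Eq.trans ?_ step2)
  refine integral_congr_ae (Filter.Eventually.of_forall fun x => ?_)
  simp only [homeomorphUnitSphereProd_apply_snd_coe, homeomorphUnitSphereProd_apply_fst_coe]
  rw [smul_inv_smul₀ (norm_ne_zero_iff.2 x.2)]

lemma integral_volumeIoiPow (h : ℝ → ℝ) (hm : Measurable h) :
    ∫ r : Set.Ioi (0:ℝ), h r ∂(Measure.volumeIoiPow 2)
      = ∫ r in Set.Ioi (0:ℝ), r^2 * h r := by
  simp only [Measure.volumeIoiPow, ENNReal.ofReal]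
  rw [integral_withDensity_eq_integral_smul
      ((measurable_subtype_coe.pow_const _).real_toNNReal),
    integral_subtype_comap measurableSet_Ioi (fun a : ℝ => Real.toNNReal (a^2) • h a)]
  refine setIntegral_congr_fun measurableSet_Ioi fun x hx => ?_
  rw [NNReal.smul_def, Real.coe_toNNReal _ (pow_nonneg hx.out.le _), smul_eq_mul]

lemma r2_ind : ∫ r in Set.Ioi (0:ℝ), r^2 * (Set.Ioo (0:ℝ) 1).indicator 1 r = 1/3 := by
  have heq : ∀ r : ℝ, r^2 * (Set.Ioo (0:ℝ) 1).indicator 1 r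
      = (Set.Ioo (0:ℝ) 1).indicator (fun r => r^2) r := by
    intro r
    by_cases h : r ∈ Set.Ioo (0:ℝ) 1 <;> simp [h]
  simp only [heq]
  rw [setIntegral_indicator measurableSet_Ioo,
    Set.inter_eq_right.2 Set.Ioo_subset_Ioi_self,
    ← MeasureTheory.integral_Ioc_eq_integral_Ioo,
    ← intervalIntegral.integral_of_le zero_le_one, integral_pow]
  norm_num

lemma sphere_to_ball (W : E3 → ℝ) (hW : Measurable W)
    (hhom : ∀ r : ℝ, 0 < r → ∀ x : E3, W (r • x) = W x) :
    ∫ ω : Metric.sphere (0:E3) 1, W ω ∂sphereMeasure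
      = 3 * ∫ x in ball (0:E3) 1, W x := by
  have key := polar_integral ((ball (0:E3) 1).indicator W)
  rw [MeasureTheory.integral_indicator measurableSet_ball] at key
  have heq : (fun p : Metric.sphere (0:E3) 1 × Set.Ioi (0:ℝ) =>
        (ball (0:E3) 1).indicator W ((p.2 : ℝ) • (p.1 : E3)))
      = fun p => W p.1 * (Set.Ioo (0:ℝ) 1).indicator 1 p.2 := by
    funext p
    have hω : ‖(p.1 : E3)‖ = 1 := mem_sphere_zero_iff_norm.1 p.1.2
    have hr : (0:ℝ) < p.2 := p.2.2
    have hnorm : ‖(p.2 : ℝ) • (p.1 : E3)‖ = (p.2 : ℝ) := by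
      rw [norm_smul, hω, mul_one, Real.norm_eq_abs, abs_of_pos hr]
    by_cases h1 : (p.2 : ℝ) < 1
    · rw [Set.indicator_of_mem (by rw [mem_ball_zero_iff, hnorm]; exact h1),
        hhom _ hr, Set.indicator_of_mem (Set.mem_Ioo.2 ⟨hr, h1⟩)]
      simp
    · rw [Set.indicator_of_notMem (by rw [mem_ball_zero_iff, hnorm]; exact h1),
        Set.indicator_of_notMem (fun hmem => h1 hmem.2)]
      simp
  rw [heq, integral_prod_mul (f := fun ω : Metric.sphere (0:E3) 1 => W ω)
      (g := fun r : Set.Ioi (0:ℝ) => (Set.Ioo (0:ℝ) 1).indicator 1 (r:ℝ)),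
    integral_volumeIoiPow _ (measurable_one.indicator measurableSet_Ioo), r2_ind] at key
  linarith

lemma ball_to_spherical (W : E3 → ℝ) (hW : Measurable W) (C : ℝ)
    (hC : ∀ x, |W x| ≤ C)
    (hhom : ∀ r : ℝ, 0 < r → ∀ x : E3, W (r • x) = W x) :
    ∫ x in ball (0:E3) 1, W x
      = (1/3) * ∫ θ in (-π)..π, ∫ φ in (0:ℝ)..π, Real.sin φ * W (sphv θ φ) := by
  classical
  have hC0 : 0 ≤ C := (abs_nonneg _).trans (hC 0)
  set g : E3 → ℝ := (ball (0:E3) 1).indicator W with hg_def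
  have hgm : Measurable g := hW.indicator measurableSet_ball
  have hgC : ∀ x, |g x| ≤ C := by
    intro x
    by_cases h : x ∈ ball (0:E3) 1
    · simpa [hg_def, h] using hC x
    · simp [hg_def, h, hC0]
  have hgInt : Integrable g := by
    refine Integrable.mono'
      (g := (ball (0:E3) 1).indicator (fun _ => C))
      ((integrable_indicator_iff measurableSet_ball).2
        (integrableOn_const measure_ball_lt_top.ne))
      hgm.aestronglyMeasurable (Filter.Eventually.of_forall fun x => ?_)
    by_cases h : x ∈ ball (0:E3) 1
    · simpa [hg_def, h] using hC x
    · simp [hg_def, h]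
  -- transport from E3 to ℝ × (ℝ × ℝ)
  set F : E3 ≃ᵐ ℝ × (ℝ × ℝ) :=
    (MeasurableEquiv.toLp 2 (Fin 3 → ℝ)).symm.trans
      ((MeasurableEquiv.piFinSuccAbove (fun _ : Fin 3 => ℝ) 2).trans
        ((MeasurableEquiv.refl ℝ).prodCongr (MeasurableEquiv.finTwoArrow))) with hF_def
  have hF : MeasurePreserving F := by
    have h1 := EuclideanSpace.volume_preserving_symm_measurableEquiv_toLp (Fin 3)
    have h2 := volume_preserving_piFinSuccAbove (fun _ : Fin 3 => ℝ) 2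
    have h3 : MeasurePreserving
        (Prod.map (id : ℝ → ℝ) (⇑(MeasurableEquiv.finTwoArrow : (Fin 2 → ℝ) ≃ᵐ ℝ × ℝ)))
        ((volume : Measure ℝ).prod (volume : Measure (Fin 2 → ℝ)))
        ((volume : Measure ℝ).prod (volume : Measure (ℝ × ℝ))) :=
      (MeasurePreserving.id volume).prod (volume_preserving_finTwoArrow ℝ)
    have h3' : MeasurePreserving
        (Prod.map (id : ℝ → ℝ) (⇑(MeasurableEquiv.finTwoArrow : (Fin 2 → ℝ) ≃ᵐ ℝ × ℝ)))
        (volume : Measure (ℝ × (Fin 2 → ℝ))) (volume : Measure (ℝ × (ℝ × ℝ))) := by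
      rwa [Measure.volume_eq_prod, Measure.volume_eq_prod (α := ℝ) (β := ℝ × ℝ)]
    exact (h3'.comp h2).comp h1
  have hFsymm_eq : ∀ p : ℝ × (ℝ × ℝ), F.symm p = V3 p.2.1 p.2.2 p.1 := by
    intro p
    have h : F (V3 p.2.1 p.2.2 p.1) = p := rfl
    exact F.symm_apply_eq.2 h.symm
  have hgV3 : ∀ p : ℝ × (ℝ × ℝ), (g ∘ F.symm) p = g (V3 p.2.1 p.2.2 p.1) := by
    intro p; rw [Function.comp_apply, hFsymm_eq]
  have hstep1 : ∫ x in ball (0:E3) 1, W x = ∫ p : ℝ × (ℝ × ℝ), g (V3 p.2.1 p.2.2 p.1) := by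
    rw [← MeasureTheory.integral_indicator measurableSet_ball,
      ← (hF.symm F).integral_comp F.symm.measurableEmbedding g]
    exact integral_congr_ae (Filter.Eventually.of_forall hgV3)
  have hgInt' : Integrable (fun p : ℝ × (ℝ × ℝ) => g (V3 p.2.1 p.2.2 p.1)) := by
    have h := ((hF.symm F).integrable_comp_emb F.symm.measurableEmbedding).2 hgInt
    rwa [show (g ∘ ⇑F.symm) = fun p : ℝ × (ℝ × ℝ) => g (V3 p.2.1 p.2.2 p.1) from funext hgV3] at h
  -- the integrand after the first polar change, as a global function
  set T : Set (ℝ × ℝ) := polarCoord.target with hT_def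
  have hTmeas : MeasurableSet T := polarCoord.open_target.measurableSet
  set Φ : ℝ × (ℝ × ℝ) → ℝ := fun p =>
    if p.2 ∈ T then
      p.2.1 * g (V3 (p.2.1 * Real.cos p.2.2) (p.2.1 * Real.sin p.2.2) p.1)
    else 0 with hΦ_def
  have hVcont : Continuous (fun p : ℝ × (ℝ × ℝ) =>
      V3 (p.2.1 * Real.cos p.2.2) (p.2.1 * Real.sin p.2.2) p.1) := by
    have hc : Continuous (fun p : ℝ × (ℝ × ℝ) =>
        ((p.2.1 * Real.cos p.2.2, p.2.1 * Real.sin p.2.2, p.1) : ℝ × ℝ × ℝ)) := by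
      fun_prop
    exact continuous_V3.comp hc
  have hΦm : Measurable Φ := by
    refine Measurable.ite (measurable_snd hTmeas) ?_ measurable_const
    exact (measurable_snd.fst).mul (hgm.comp hVcont.measurable)
  have hV3sq : ∀ r th z : ℝ, (r * Real.cos th)^2 + (r * Real.sin th)^2 + z^2 = r^2 + z^2 := by
    intro r th z
    have h := Real.sin_sq_add_cos_sq th
    nlinarith
  have hΦInt : Integrable Φ := by
    set K : Set (ℝ × (ℝ × ℝ)) :=
      Set.Icc (-1:ℝ) 1 ×ˢ (Set.Icc (0:ℝ) 1 ×ˢ Set.Icc (-π) π) with hK_def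
    have hKmeas : MeasurableSet K :=
      measurableSet_Icc.prod (measurableSet_Icc.prod measurableSet_Icc)
    refine Integrable.mono' (g := K.indicator (fun _ => C))
      ((integrable_indicator_iff hKmeas).2
        (integrableOn_const
          (isCompact_Icc.prod (isCompact_Icc.prod isCompact_Icc)).measure_lt_top.ne))
      hΦm.aestronglyMeasurable (Filter.Eventually.of_forall fun p => ?_)
    have hind0 : (0:ℝ) ≤ K.indicator (fun _ => C) p :=
      Set.indicator_nonneg (fun _ _ => hC0) p
    by_cases hp2 : p.2 ∈ T
    · by_cases hg0 : g (V3 (p.2.1 * Real.cos p.2.2) (p.2.1 * Real.sin p.2.2) p.1) = 0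
      · simp only [hΦ_def, hp2, if_true, hg0, mul_zero]
        simpa using hind0
      · -- the point is in the unit ball, hence p ∈ K
        have hball : V3 (p.2.1 * Real.cos p.2.2) (p.2.1 * Real.sin p.2.2) p.1 ∈ ball (0:E3) 1 := by
          by_contra hmem
          exact hg0 (Set.indicator_of_notMem hmem W)
        rw [mem_ball_zero_iff, norm_V3, hV3sq] at hball
        have hsq : p.2.1^2 + p.1^2 < 1 := by
          nlinarith [Real.sq_sqrt (show (0:ℝ) ≤ p.2.1^2 + p.1^2 by positivity),
            Real.sqrt_nonneg (p.2.1^2 + p.1^2)]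
        have hp2T : (0:ℝ) < p.2.1 ∧ p.2.2 ∈ Set.Ioo (-π) π := by
          have := hp2
          rw [hT_def, polarCoord_target] at this
          exact ⟨this.1, this.2⟩
        have hpK : p ∈ K := by
          refine ⟨?_, ?_, ?_⟩
          · constructor <;> nlinarith
          · exact ⟨hp2T.1.le, by nlinarith⟩
          · exact ⟨hp2T.2.1.le, hp2T.2.2.le⟩
        rw [Set.indicator_of_mem hpK]
        have h1 : |p.2.1| ≤ 1 := by rw [abs_of_pos hp2T.1]; nlinarith
        calc ‖Φ p‖ = |p.2.1| * |g (V3 (p.2.1 * Real.cos p.2.2) (p.2.1 * Real.sin p.2.2) p.1)| := by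
              rw [hΦ_def]; simp only [hp2, if_true, Real.norm_eq_abs, abs_mul]
          _ ≤ 1 * C := mul_le_mul h1 (hgC _) (abs_nonneg _) one_pos.le
          _ = C := one_mul C
    · simp only [hΦ_def, hp2, if_false]
      simpa using hind0
  -- permutation (θ, (z, r)) ↦ (z, (r, θ))
  set M : ℝ × (ℝ × ℝ) ≃ᵐ ℝ × (ℝ × ℝ) :=
    (MeasurableEquiv.prodComm : ℝ × (ℝ × ℝ) ≃ᵐ (ℝ × ℝ) × ℝ).trans
      MeasurableEquiv.prodAssoc with hM_def
  have hMapp : ∀ t : ℝ × (ℝ × ℝ), M t = (t.2.1, (t.2.2, t.1)) := fun t => rfl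
  have hvol3 : (volume : Measure (ℝ × (ℝ × ℝ)))
      = (volume : Measure ℝ).prod ((volume : Measure ℝ).prod (volume : Measure ℝ)) := by
    rw [Measure.volume_eq_prod, Measure.volume_eq_prod]
  have hM : MeasurePreserving M
      ((volume : Measure ℝ).prod ((volume : Measure ℝ).prod (volume : Measure ℝ)))
      ((volume : Measure ℝ).prod ((volume : Measure ℝ).prod (volume : Measure ℝ))) := by
    have h1 : MeasurePreserving (Prod.swap :  ℝ × (ℝ × ℝ) → (ℝ × ℝ) × ℝ)
        ((volume : Measure ℝ).prod ((volume : Measure ℝ).prod (volume : Measure ℝ)))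
        (((volume : Measure ℝ).prod (volume : Measure ℝ)).prod (volume : Measure ℝ)) :=
      Measure.measurePreserving_swap
    exact (measurePreserving_prodAssoc volume volume volume).comp h1
  have hΦInt2 : Integrable Φ
      ((volume : Measure ℝ).prod ((volume : Measure ℝ).prod (volume : Measure ℝ))) := by
    rwa [← hvol3]
  have hΦMInt : Integrable (fun t : ℝ × (ℝ × ℝ) => Φ (t.2.1, (t.2.2, t.1)))
      ((volume : Measure ℝ).prod ((volume : Measure ℝ).prod (volume : Measure ℝ))) := by
    have h := (hM.integrable_comp_emb M.measurableEmbedding).2 hΦInt2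
    rwa [show (Φ ∘ ⇑M) = fun t : ℝ × (ℝ × ℝ) => Φ (t.2.1, (t.2.2, t.1)) from
      funext fun t => by rw [Function.comp_apply, hMapp]] at h
  -- value of the ρ-factor
  have sin_pos_iff : ∀ φ : ℝ, φ ∈ Set.Ioo (-π) π → (0 < Real.sin φ ↔ φ ∈ Set.Ioo (0:ℝ) π) := by
    intro φ hφ
    constructor
    · intro hs
      rcases le_or_gt φ 0 with h | h
      · exfalso
        have : Real.sin φ ≤ 0 := Real.sin_nonpos_of_nonpos_of_neg_pi_le h hφ.1.le
        linarith
      · exact ⟨h, hφ.2⟩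
    · intro hmem
      exact Real.sin_pos_of_pos_of_lt_pi hmem.1 hmem.2
  calc ∫ x in ball (0:E3) 1, W x
      = ∫ p : ℝ × (ℝ × ℝ), g (V3 p.2.1 p.2.2 p.1) := hstep1
    _ = ∫ z : ℝ, ∫ q : ℝ × ℝ, g (V3 q.1 q.2 z) := by
        rw [Measure.volume_eq_prod] at hgInt' ⊢
        exact integral_prod _ hgInt'
    _ = ∫ z : ℝ, ∫ q : ℝ × ℝ, Φ (z, q) := by
        refine integral_congr_ae (Filter.Eventually.of_forall fun z => ?_)
        dsimp only
        rw [← integral_comp_polarCoord_symm (fun q : ℝ × ℝ => g (V3 q.1 q.2 z)),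
          ← MeasureTheory.integral_indicator hTmeas]
        refine integral_congr_ae (Filter.Eventually.of_forall fun q => ?_)
        dsimp only
        rw [Set.indicator_apply]
        simp only [hΦ_def, polarCoord_symm_apply, smul_eq_mul]
    _ = ∫ p : ℝ × (ℝ × ℝ), Φ p := by
        rw [Measure.volume_eq_prod]
        exact (integral_prod _ (by rwa [← Measure.volume_eq_prod])).symm
    _ = ∫ t : ℝ × (ℝ × ℝ), Φ (t.2.1, (t.2.2, t.1)) := by
        rw [hvol3]
        rw [← hM.integral_comp M.measurableEmbedding Φ]
        exact integral_congr_ae (Filter.Eventually.of_forall fun t => by dsimp only; rw [hMapp])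
    _ = ∫ θ : ℝ, ∫ s : ℝ × ℝ, Φ (s.1, (s.2, θ)) := by
        rw [show (fun t : ℝ × (ℝ × ℝ) => Φ (t.2.1, (t.2.2, t.1)))
          = fun t : ℝ × (ℝ × ℝ) => (fun θ s => Φ (s.1, (s.2, θ))) t.1 t.2 from rfl]
        exact integral_prod _ hΦMInt
    _ = ∫ θ : ℝ, (if θ ∈ Set.Ioo (-π) π then (1:ℝ) else 0) *
          ((1/3) * ∫ φ in (0:ℝ)..π, Real.sin φ * W (sphv θ φ)) := by
        refine integral_congr_ae (Filter.Eventually.of_forall fun θ => ?_)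
        dsimp only
        rw [← integral_comp_polarCoord_symm (fun s : ℝ × ℝ => Φ (s.1, (s.2, θ)))]
        have hpt : ∀ s ∈ T, s.1 • Φ ((polarCoord.symm s).1, ((polarCoord.symm s).2, θ))
            = (if θ ∈ Set.Ioo (-π) π then (1:ℝ) else 0) *
              ((s.1^2 * (Set.Ioo (0:ℝ) 1).indicator 1 s.1) *
               ((Set.Ioo (0:ℝ) π).indicator (fun φ => Real.sin φ * W (sphv θ φ)) s.2)) := by
          rintro ⟨ρ, φ⟩ hs
          have hsT : (0:ℝ) < ρ ∧ φ ∈ Set.Ioo (-π) π := by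
            have := hs
            rw [hT_def, polarCoord_target] at this
            exact ⟨this.1, this.2⟩
          obtain ⟨hρ, hφ⟩ := hsT
          simp only [polarCoord_symm_apply, smul_eq_mul]
          by_cases hθ : θ ∈ Set.Ioo (-π) π
          · simp only [hθ, if_true, one_mul]
            by_cases hsin : 0 < Real.sin φ
            · have hφmem : φ ∈ Set.Ioo (0:ℝ) π := (sin_pos_iff φ hφ).1 hsin
              have hmemT : ((ρ * Real.sin φ, θ) : ℝ × ℝ) ∈ T := by
                rw [hT_def, polarCoord_target]
                exact ⟨mul_pos hρ hsin, hθ⟩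
              simp only [hΦ_def, hmemT, if_true]
              have hxeq : V3 (ρ * Real.sin φ * Real.cos θ) (ρ * Real.sin φ * Real.sin θ)
                  (ρ * Real.cos φ) = ρ • sphv θ φ := by
                rw [sphv, smul_V3, mul_assoc, mul_assoc]
              have hnx : ‖(ρ:ℝ) • sphv θ φ‖ = ρ := by
                rw [norm_smul, norm_sphv, mul_one, Real.norm_eq_abs, abs_of_pos hρ]
              rw [hxeq]
              by_cases hρ1 : ρ < 1
              · have hmem : (ρ:ℝ) • sphv θ φ ∈ ball (0:E3) 1 := by
                  rw [mem_ball_zero_iff, hnx]; exact hρ1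
                rw [hg_def]
                rw [Set.indicator_of_mem hmem W, hhom ρ hρ,
                  Set.indicator_of_mem hφmem, Set.indicator_of_mem (Set.mem_Ioo.2 ⟨hρ, hρ1⟩)]
                simp only [Pi.one_apply]
                ring
              · have hmem : (ρ:ℝ) • sphv θ φ ∉ ball (0:E3) 1 := by
                  rw [mem_ball_zero_iff, hnx]; exact hρ1
                rw [hg_def, Set.indicator_of_notMem hmem,
                  Set.indicator_of_notMem (fun hc => hρ1 hc.2)]
                ring
            · -- sin φ ≤ 0 : both sides vanish
              have hmemT : ((ρ * Real.sin φ, θ) : ℝ × ℝ) ∉ T := by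
                rw [hT_def, polarCoord_target]
                rintro ⟨h1, -⟩
                simp only [Set.mem_Ioi] at h1
                push_neg at hsin
                nlinarith
              have hφmem : φ ∉ Set.Ioo (0:ℝ) π := fun hc => hsin ((sin_pos_iff φ hφ).2 hc)
              simp only [hΦ_def, hmemT, if_false, Set.indicator_of_notMem hφmem]
              ring
          · -- θ outside
            have hmemT : ((ρ * Real.sin φ, θ) : ℝ × ℝ) ∉ T := by
              rw [hT_def, polarCoord_target]
              rintro ⟨-, h2⟩
              exact hθ h2
            simp only [hΦ_def, hmemT, if_false, hθ, if_false]
            ring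
        rw [setIntegral_congr_fun hTmeas hpt, MeasureTheory.integral_const_mul]
        congr 1
        rw [hT_def, polarCoord_target, Measure.volume_eq_prod,
          setIntegral_prod_mul (fun ρ : ℝ => ρ^2 * (Set.Ioo (0:ℝ) 1).indicator 1 ρ)
            (fun φ : ℝ => (Set.Ioo (0:ℝ) π).indicator (fun t => Real.sin t * W (sphv θ t)) φ),
          r2_ind, setIntegral_indicator measurableSet_Ioo,
          Set.inter_eq_right.2 (Set.Ioo_subset_Ioo (by linarith [Real.pi_pos]) le_rfl),
          ← MeasureTheory.integral_Ioc_eq_integral_Ioo,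
          ← intervalIntegral.integral_of_le Real.pi_pos.le]
    _ = (1/3) * ∫ θ in (-π)..π, ∫ φ in (0:ℝ)..π, Real.sin φ * W (sphv θ φ) := by
        rw [show (fun θ : ℝ => (if θ ∈ Set.Ioo (-π) π then (1:ℝ) else 0) *
              ((1/3) * ∫ φ in (0:ℝ)..π, Real.sin φ * W (sphv θ φ)))
            = fun θ : ℝ => (Set.Ioo (-π) π).indicator
              (fun θ => (1/3) * ∫ φ in (0:ℝ)..π, Real.sin φ * W (sphv θ φ)) θ from
          funext fun θ => by rw [Set.indicator_apply]; by_cases h : θ ∈ Set.Ioo (-π) π <;>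
            simp [h]]
        rw [MeasureTheory.integral_indicator measurableSet_Ioo,
          ← MeasureTheory.integral_Ioc_eq_integral_Ioo,
          ← intervalIntegral.integral_of_le (by linarith [Real.pi_pos] : -π ≤ π),
          intervalIntegral.integral_const_mul]

lemma sphere_to_spherical (W : E3 → ℝ) (hW : Measurable W) (C : ℝ)
    (hC : ∀ x, |W x| ≤ C)
    (hhom : ∀ r : ℝ, 0 < r → ∀ x : E3, W (r • x) = W x) :
    ∫ ω : Metric.sphere (0:E3) 1, W ω ∂sphereMeasure
      = ∫ θ in (-π)..π, ∫ φ in (0:ℝ)..π, Real.sin φ * W (sphv θ φ) := by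
  rw [sphere_to_ball W hW hhom, ball_to_spherical W hW C hC hhom]
  ring

/-! ### One dimensional integrals -/

lemma cos_substitution (H : ℝ → ℝ) (hH : Continuous H) :
    ∫ φ in (0:ℝ)..π, Real.sin φ * H (Real.cos φ) = ∫ t in (-1:ℝ)..1, H t := by
  have key := intervalIntegral.integral_comp_smul_deriv (a := (0:ℝ)) (b := π)
    (f := Real.cos) (f' := fun φ => -Real.sin φ) (g := H)
    (fun x _ => Real.hasDerivAt_cos x)
    (Real.continuous_sin.neg.continuousOn) hH
  rw [Real.cos_zero, Real.cos_pi] at key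
  have h1 : (∫ φ in (0:ℝ)..π, (-Real.sin φ) • (H ∘ Real.cos) φ)
      = -∫ φ in (0:ℝ)..π, Real.sin φ * H (Real.cos φ) := by
    rw [← intervalIntegral.integral_neg]
    refine intervalIntegral.integral_congr fun x _ => ?_
    rw [smul_eq_mul, Function.comp_apply, neg_mul]
  have h2 : (∫ t in (1:ℝ)..(-1), H t) = -∫ t in (-1:ℝ)..1, H t :=
    intervalIntegral.integral_symm _ _
  rw [h1, h2] at key
  linarith

lemma int_theta_one : ∫ _ in (-π)..π, (1:ℝ) = 2*π := by
  simp
  ring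

lemma int_theta_cos : ∫ θ in (-π)..π, Real.cos θ = 0 := by
  simp [integral_cos]

lemma int_theta_sin : ∫ θ in (-π)..π, Real.sin θ = 0 := by
  simp [integral_sin]

lemma int_theta_cos_sq : ∫ θ in (-π)..π, Real.cos θ^2 = π := by
  rw [integral_cos_sq]
  simp

lemma int_theta_sin_sq : ∫ θ in (-π)..π, Real.sin θ^2 = π := by
  rw [integral_sin_sq]
  simp

lemma int_theta_sin_cos : ∫ θ in (-π)..π, Real.sin θ * Real.cos θ = 0 := by
  have h : ∀ x ∈ Set.uIcc (-π) π, HasDerivAt (fun y => Real.sin y ^ 2 / 2)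
      (Real.sin x * Real.cos x) x := by
    intro x _
    have h1 : HasDerivAt (fun y => Real.sin y ^ 2 / 2)
        (2 * Real.sin x ^ (2-1) * Real.cos x / 2) x :=
      ((Real.hasDerivAt_sin x).pow 2).div_const 2
    simpa using h1.congr_deriv (by ring)
  rw [intervalIntegral.integral_eq_sub_of_hasDerivAt h
    ((Real.continuous_sin.mul Real.continuous_cos).intervalIntegrable _ _)]
  simp

lemma theta_integral (A B Cst D Eo Fo : ℝ) :
    ∫ θ in (-π)..π, (A * Real.cos θ + B * Real.sin θ + Cst + D * Real.cos θ^2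
      + Eo * (Real.sin θ * Real.cos θ) + Fo * Real.sin θ^2)
    = Cst * (2*π) + D * π + Fo * π := by
  have hc : IntervalIntegrable (fun θ : ℝ => A * Real.cos θ) volume (-π) π :=
    (continuous_const.mul Real.continuous_cos).intervalIntegrable _ _
  have hs : IntervalIntegrable (fun θ : ℝ => B * Real.sin θ) volume (-π) π :=
    (continuous_const.mul Real.continuous_sin).intervalIntegrable _ _
  have hk : IntervalIntegrable (fun _ : ℝ => Cst) volume (-π) π :=
    intervalIntegrable_const
  have hc2 : IntervalIntegrable (fun θ : ℝ => D * Real.cos θ^2) volume (-π) π :=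
    (continuous_const.mul (Real.continuous_cos.pow 2)).intervalIntegrable _ _
  have hsc : IntervalIntegrable (fun θ : ℝ => Eo * (Real.sin θ * Real.cos θ)) volume (-π) π :=
    (continuous_const.mul (Real.continuous_sin.mul Real.continuous_cos)).intervalIntegrable _ _
  have hs2 : IntervalIntegrable (fun θ : ℝ => Fo * Real.sin θ^2) volume (-π) π :=
    (continuous_const.mul (Real.continuous_sin.pow 2)).intervalIntegrable _ _
  rw [intervalIntegral.integral_add ((((hc.add hs).add hk).add hc2).add hsc) hs2,
    intervalIntegral.integral_add (((hc.add hs).add hk).add hc2) hsc,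
    intervalIntegral.integral_add ((hc.add hs).add hk) hc2,
    intervalIntegral.integral_add (hc.add hs) hk,
    intervalIntegral.integral_add hc hs,
    intervalIntegral.integral_const_mul, intervalIntegral.integral_const_mul,
    intervalIntegral.integral_const_mul, intervalIntegral.integral_const_mul,
    intervalIntegral.integral_const_mul,
    int_theta_cos, int_theta_sin, int_theta_cos_sq, int_theta_sin_sq, int_theta_sin_cos,
    intervalIntegral.integral_const]
  simp
  ring

lemma t_expand (G : ℝ → ℝ) (hG : Continuous G) (c1 c2 c3 c4 c5 c6 c7 c8 c9 : ℝ) :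
    ∫ t in (-1:ℝ)..1,
        (c1 * (G t * (t * Real.sqrt (1 - t^2))) + c2 * (G t * (t * Real.sqrt (1 - t^2)))
          + c3 * (G t * t^2)
          + c4 * (G t * (t^2 * Real.sqrt (1 - t^2)^2))
          + c5 * (G t * (t^2 * Real.sqrt (1 - t^2)^2))
          + c6 * (G t * (t^2 * Real.sqrt (1 - t^2)^2))
          + c7 * (G t * (t^3 * Real.sqrt (1 - t^2)))
          + c8 * (G t * (t^3 * Real.sqrt (1 - t^2)))
          + c9 * (G t * t^4))
    = (c1 + c2) * (∫ t in (-1:ℝ)..1, G t * (t * Real.sqrt (1 - t^2)))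
      + c3 * (∫ t in (-1:ℝ)..1, G t * t^2)
      + (c4 + c5 + c6) * (∫ t in (-1:ℝ)..1, G t * (t^2 * Real.sqrt (1 - t^2)^2))
      + (c7 + c8) * (∫ t in (-1:ℝ)..1, G t * (t^3 * Real.sqrt (1 - t^2)))
      + c9 * (∫ t in (-1:ℝ)..1, G t * t^4) := by
  have hsq : Continuous (fun t : ℝ => Real.sqrt (1 - t^2)) :=
    Real.continuous_sqrt.comp (by fun_prop)
  have hK1 : Continuous (fun t : ℝ => G t * (t * Real.sqrt (1 - t^2))) := by fun_prop
  have hK2 : Continuous (fun t : ℝ => G t * t^2) := by fun_prop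
  have hK3 : Continuous (fun t : ℝ => G t * (t^2 * Real.sqrt (1 - t^2)^2)) := by fun_prop
  have hK4 : Continuous (fun t : ℝ => G t * (t^3 * Real.sqrt (1 - t^2))) := by fun_prop
  have hK5 : Continuous (fun t : ℝ => G t * t^4) := by fun_prop
  have h1 : IntervalIntegrable (fun t : ℝ => (c1 + c2) * (G t * (t * Real.sqrt (1 - t^2))))
      volume (-1) 1 := (continuous_const.mul hK1).intervalIntegrable _ _
  have h2 : IntervalIntegrable (fun t : ℝ => c3 * (G t * t^2)) volume (-1) 1 :=
    (continuous_const.mul hK2).intervalIntegrable _ _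
  have h3 : IntervalIntegrable
      (fun t : ℝ => (c4 + c5 + c6) * (G t * (t^2 * Real.sqrt (1 - t^2)^2))) volume (-1) 1 :=
    (continuous_const.mul hK3).intervalIntegrable _ _
  have h4 : IntervalIntegrable (fun t : ℝ => (c7 + c8) * (G t * (t^3 * Real.sqrt (1 - t^2))))
      volume (-1) 1 := (continuous_const.mul hK4).intervalIntegrable _ _
  have h5 : IntervalIntegrable (fun t : ℝ => c9 * (G t * t^4)) volume (-1) 1 :=
    (continuous_const.mul hK5).intervalIntegrable _ _
  have hcongr : ∀ t ∈ Set.uIcc (-1:ℝ) 1,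
      (c1 * (G t * (t * Real.sqrt (1 - t^2))) + c2 * (G t * (t * Real.sqrt (1 - t^2)))
        + c3 * (G t * t^2)
        + c4 * (G t * (t^2 * Real.sqrt (1 - t^2)^2))
        + c5 * (G t * (t^2 * Real.sqrt (1 - t^2)^2))
        + c6 * (G t * (t^2 * Real.sqrt (1 - t^2)^2))
        + c7 * (G t * (t^3 * Real.sqrt (1 - t^2)))
        + c8 * (G t * (t^3 * Real.sqrt (1 - t^2)))
        + c9 * (G t * t^4))
      = ((c1 + c2) * (G t * (t * Real.sqrt (1 - t^2))) + c3 * (G t * t^2)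
        + (c4 + c5 + c6) * (G t * (t^2 * Real.sqrt (1 - t^2)^2))
        + (c7 + c8) * (G t * (t^3 * Real.sqrt (1 - t^2)))
        + c9 * (G t * t^4)) := fun t _ => by ring
  rw [intervalIntegral.integral_congr hcongr,
    intervalIntegral.integral_add ((((h1.add h2)).add h3).add h4) h5,
    intervalIntegral.integral_add ((h1.add h2).add h3) h4,
    intervalIntegral.integral_add (h1.add h2) h3,
    intervalIntegral.integral_add h1 h2,
    intervalIntegral.integral_const_mul, intervalIntegral.integral_const_mul,
    intervalIntegral.integral_const_mul, intervalIntegral.integral_const_mul,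
    intervalIntegral.integral_const_mul]

end Stmt7Aux

set_option maxHeartbeats 2000000

/-- `Z(v) = b [v ⊗ v − (|v|²/3) I]` with
`b = 3π ∫_{−1}^{1} B(x) x² (1−x²) dx`. -/
theorem stmt7 (B : ℝ → ℝ) (hB : ContinuousOn B (Set.Icc (-1) 1))
    (b : ℝ) (hb : b = 3 * Real.pi * ∫ x in (-1 : ℝ)..1, B x * (x ^ 2 * (1 - x ^ 2)))
    (v : E3) (hv : v ≠ 0) :
    ∀ i j, Zmat B v i j =
      b * (v i * v j - if i = j then ‖v‖ ^ 2 / 3 else 0) := by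
  classical
  open Stmt7Aux in
  intro i j
  have hV : (0:ℝ) < ‖v‖ := norm_pos_iff.2 hv
  set V : ℝ := ‖v‖ with hV_def
  set u : E3 := ‖v‖⁻¹ • v with hu_def
  have hu1 : ‖u‖ = 1 := norm_smul_inv_norm hv
  -- the clamped version of B
  set cl : ℝ → ℝ := fun t => max (-1) (min 1 t) with hcl_def
  have hcl_mem : ∀ t, cl t ∈ Set.Icc (-1:ℝ) 1 :=
    fun t => ⟨le_max_left _ _, max_le (by norm_num) (min_le_left _ _)⟩
  have hcl_eq : ∀ t ∈ Set.Icc (-1:ℝ) 1, cl t = t := fun t ht => by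
    rw [hcl_def]
    dsimp only
    rw [min_eq_right ht.2, max_eq_right ht.1]
  have hcl_cont : Continuous cl := continuous_const.max (continuous_const.min continuous_id)
  set Bc : ℝ → ℝ := fun t => B (cl t) with hBc_def
  have hBc_cont : Continuous Bc := hB.comp_continuous hcl_cont hcl_mem
  obtain ⟨MB, hMB⟩ : ∃ MB, ∀ t, |Bc t| ≤ MB := by
    obtain ⟨M, hM⟩ := isCompact_Icc.exists_bound_of_continuousOn hB
    exact ⟨M, fun t => hM _ (hcl_mem t)⟩
  have hBc_eq : ∀ t ∈ Set.Icc (-1:ℝ) 1, Bc t = B t := fun t ht => congrArg B (hcl_eq t ht)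
  -- an orthonormal basis with third vector u, and the rotation e
  have horth : Orthonormal ℝ (Set.restrict {(2:Fin 3)} (fun _ : Fin 3 => u)) := by
    constructor
    · intro i0
      exact hu1
    · intro i0 j0 hij
      exfalso
      refine hij (Subtype.ext ?_)
      have h1 : (i0 : Fin 3) = 2 := i0.2
      have h2 : (j0 : Fin 3) = 2 := j0.2
      rw [h1, h2]
  obtain ⟨bb, hbb⟩ := horth.exists_orthonormalBasis_extension_of_card_eq
    (by simp [Stmt7Aux.finrank_E3])
  have hb2 : bb 2 = u := hbb 2 rfl
  set e : E3 ≃ₗᵢ[ℝ] E3 := bb.repr.symm with he_def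
  have heu : e (EuclideanSpace.single (2:Fin 3) (1:ℝ)) = u := by
    rw [he_def, bb.repr_symm_single, hb2]
  set w : Fin 3 → E3 := fun k => e.symm (EuclideanSpace.single k (1:ℝ)) with hw_def
  have hadj : ∀ (x y : E3), ⟪e x, y⟫ = ⟪x, e.symm y⟫ := by
    intro x y
    conv_lhs => rw [show y = e (e.symm y) from (e.apply_symm_apply y).symm]
    exact e.inner_map_map x (e.symm y)
  have hadj' : ∀ (x y : E3), ⟪e.symm x, y⟫ = ⟪x, e y⟫ := by
    intro x y
    rw [real_inner_comm, ← hadj y x, real_inner_comm]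
  have hcoord : ∀ (x : E3) (k : Fin 3), ⟪x, EuclideanSpace.single k (1:ℝ)⟫ = x k := by
    intro x k
    simp [PiLp.inner_apply, EuclideanSpace.single_apply]
  have hw2 : ∀ k, w k 2 = u k := by
    intro k
    rw [← hcoord (w k) 2, hw_def]
    dsimp only
    rw [hadj', heu, real_inner_comm, hcoord]
  have hworth : ∀ k l : Fin 3, w k 0 * w l 0 + w k 1 * w l 1 + w k 2 * w l 2
      = if k = l then (1:ℝ) else 0 := by
    intro k l
    have h1 : ⟪w k, w l⟫ = if k = l then (1:ℝ) else 0 := by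
      rw [hw_def]
      dsimp only
      rw [e.symm.inner_map_map, hcoord, EuclideanSpace.single_apply]
      by_cases h : k = l <;> simp [h, eq_comm]
    rw [PiLp.inner_apply, Fin.sum_univ_three] at h1
    convert h1 using 1 <;> simp [mul_comm]
  have hnormw : ∀ k, ‖w k‖ = 1 := by
    intro k
    rw [hw_def]
    dsimp only
    rw [e.symm.norm_map, EuclideanSpace.norm_single, norm_one]
  -- the zonal lifts
  set W0 : E3 → ℝ := fun x =>
    Bc (⟪x, u⟫ / ‖x‖) * ((v i - (V * (⟪x, u⟫ / ‖x‖)) * (x i / ‖x‖))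
      * ((V * (⟪x, u⟫ / ‖x‖)) * (x j / ‖x‖))) with hW0_def
  set Wf : E3 → ℝ := fun x =>
    Bc (x 2 / ‖x‖) * ((v i - (V * (x 2 / ‖x‖)) * (⟪x, w i⟫ / ‖x‖))
      * ((V * (x 2 / ‖x‖)) * (⟪x, w j⟫ / ‖x‖))) with hWf_def
  have hproj : ∀ k : Fin 3, Continuous fun x : E3 => x k := by
    intro k
    exact (continuous_apply k).comp (PiLp.continuous_ofLp 2 (fun _ : Fin 3 => ℝ))
  have hinner_cont : ∀ c : E3, Continuous fun x : E3 => (inner ℝ x c : ℝ) := by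
    intro c
    exact continuous_id.inner continuous_const
  have hW0m : Measurable W0 := by
    rw [hW0_def]
    refine (hBc_cont.measurable.comp (((hinner_cont u).measurable).div
      continuous_norm.measurable)).mul ?_
    refine Measurable.mul ?_ ?_
    · refine Measurable.sub measurable_const ?_
      exact (measurable_const.mul (((hinner_cont u).measurable).div
        continuous_norm.measurable)).mul (((hproj i).measurable).div continuous_norm.measurable)
    · exact (measurable_const.mul (((hinner_cont u).measurable).div
        continuous_norm.measurable)).mul (((hproj j).measurable).div continuous_norm.measurable)
  have hWfm : Measurable Wf := by
    rw [hWf_def]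
    refine (hBc_cont.measurable.comp (((hproj 2).measurable).div
      continuous_norm.measurable)).mul ?_
    refine Measurable.mul ?_ ?_
    · refine Measurable.sub measurable_const ?_
      exact (measurable_const.mul (((hproj 2).measurable).div
        continuous_norm.measurable)).mul (((hinner_cont (w i)).measurable).div
        continuous_norm.measurable)
    · exact (measurable_const.mul (((hproj 2).measurable).div
        continuous_norm.measurable)).mul (((hinner_cont (w j)).measurable).div
        continuous_norm.measurable)
  have hdivhom : ∀ (r : ℝ), 0 < r → ∀ (a n : ℝ), (r * a) / (r * n) = a / n := by
    intro r hr a n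
    rw [mul_div_mul_left a n hr.ne']
  have hW0hom : ∀ (r : ℝ), 0 < r → ∀ x : E3, W0 (r • x) = W0 x := by
    intro r hr x
    rw [hW0_def]
    dsimp only
    rw [real_inner_smul_left, norm_smul, Real.norm_eq_abs, abs_of_pos hr]
    rw [show (r • x) i = r * x i from rfl, show (r • x) j = r * x j from rfl]
    rw [hdivhom r hr, hdivhom r hr, hdivhom r hr]
  have hWfhom : ∀ (r : ℝ), 0 < r → ∀ x : E3, Wf (r • x) = Wf x := by
    intro r hr x
    rw [hWf_def]
    dsimp only
    rw [real_inner_smul_left, real_inner_smul_left, norm_smul, Real.norm_eq_abs, abs_of_pos hr]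
    rw [show (r • x) 2 = r * x 2 from rfl]
    rw [hdivhom r hr, hdivhom r hr, hdivhom r hr]
  -- bounds for Wf
  have habs_coord : ∀ (x : E3) (k : Fin 3), |x k| ≤ ‖x‖ := by
    intro x k
    rw [← hcoord x k]
    calc |⟪x, EuclideanSpace.single k (1:ℝ)⟫| ≤ ‖x‖ * ‖EuclideanSpace.single k (1:ℝ)‖ :=
          abs_real_inner_le_norm _ _
      _ = ‖x‖ := by rw [EuclideanSpace.norm_single, norm_one, mul_one]
  have hfrac : ∀ (y : ℝ) (x : E3), |y| ≤ ‖x‖ → |y / ‖x‖| ≤ 1 := by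
    intro y x hy
    rcases eq_or_lt_of_le (norm_nonneg x) with h0 | h0
    · have hx0 : ‖x‖ = 0 := h0.symm
      have hy0 : y = 0 := abs_nonpos_iff.1 (by rwa [hx0] at hy)
      simp [hy0]
    · rw [abs_div, abs_of_pos h0, div_le_one h0]
      exact hy
  set CW : ℝ := MB * ((|v i| + V) * V) with hCW_def
  have hWfbd : ∀ x, |Wf x| ≤ CW := by
    intro x
    rw [hWf_def, hCW_def]
    dsimp only
    have h2 : |x 2 / ‖x‖| ≤ 1 := hfrac _ x (habs_coord x 2)
    have hwi : |⟪x, w i⟫ / ‖x‖| ≤ 1 := by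
      refine hfrac _ x ?_
      calc |⟪x, w i⟫| ≤ ‖x‖ * ‖w i‖ := abs_real_inner_le_norm _ _
        _ = ‖x‖ := by rw [hnormw, mul_one]
    have hwj : |⟪x, w j⟫ / ‖x‖| ≤ 1 := by
      refine hfrac _ x ?_
      calc |⟪x, w j⟫| ≤ ‖x‖ * ‖w j‖ := abs_real_inner_le_norm _ _
        _ = ‖x‖ := by rw [hnormw, mul_one]
    have hVpos : (0:ℝ) < V := hV
    have hfac2 : |(V * (x 2 / ‖x‖)) * (⟪x, w j⟫ / ‖x‖)| ≤ V := by
      rw [abs_mul, abs_mul, abs_of_pos hVpos]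
      calc V * |x 2 / ‖x‖| * |⟪x, w j⟫ / ‖x‖| ≤ V * 1 * 1 := by
            apply mul_le_mul _ hwj (abs_nonneg _) (by positivity)
            exact mul_le_mul_of_nonneg_left h2 hVpos.le
        _ = V := by ring
    have hfac1 : |v i - (V * (x 2 / ‖x‖)) * (⟪x, w i⟫ / ‖x‖)| ≤ |v i| + V := by
      refine (abs_sub _ _).trans ?_
      gcongr
      rw [abs_mul, abs_mul, abs_of_pos hVpos]
      calc V * |x 2 / ‖x‖| * |⟪x, w i⟫ / ‖x‖| ≤ V * 1 * 1 := by
            apply mul_le_mul _ hwi (abs_nonneg _) (by positivity)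
            exact mul_le_mul_of_nonneg_left h2 hVpos.le
        _ = V := by ring
    calc |Bc (x 2 / ‖x‖) * ((v i - (V * (x 2 / ‖x‖)) * (⟪x, w i⟫ / ‖x‖))
            * ((V * (x 2 / ‖x‖)) * (⟪x, w j⟫ / ‖x‖)))|
        = |Bc (x 2 / ‖x‖)| * (|v i - (V * (x 2 / ‖x‖)) * (⟪x, w i⟫ / ‖x‖)|
            * |(V * (x 2 / ‖x‖)) * (⟪x, w j⟫ / ‖x‖)|) := by
          rw [abs_mul, abs_mul]
      _ ≤ MB * ((|v i| + V) * V) := by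
          have hMB0 : 0 ≤ MB := (abs_nonneg _).trans (hMB 0)
          apply mul_le_mul (hMB _) _ (by positivity) hMB0
          apply mul_le_mul hfac1 hfac2 (abs_nonneg _) (by positivity)
  -- Step A : Zmat entry equals the sphere integral of W0
  have stepA : Zmat B v i j = ∫ ω : Metric.sphere (0:E3) 1, W0 ω ∂sphereMeasure := by
    refine integral_congr_ae (Filter.Eventually.of_forall fun ω => ?_)
    have hω : ‖(ω : E3)‖ = 1 := mem_sphere_zero_iff_norm.1 ω.2
    have habs : |⟪(ω:E3), u⟫| ≤ 1 := by
      calc |⟪(ω:E3), u⟫| ≤ ‖(ω:E3)‖ * ‖u‖ := abs_real_inner_le_norm _ _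
        _ = 1 := by rw [hω, hu1, mul_one]
    have hinner : ⟪(ω:E3), v⟫ / V = ⟪(ω:E3), u⟫ := by
      rw [hu_def, real_inner_smul_right, ← hV_def]
      field_simp
    have hvω : ⟪v, (ω:E3)⟫ = V * ⟪(ω:E3), u⟫ := by
      rw [← hinner, real_inner_comm]
      field_simp
    rw [hW0_def]
    dsimp only
    rw [hω, div_one, div_one, div_one, hBc_eq _ (abs_le.1 habs), ← hinner]
    rw [Pω, Pperp]
    rw [show (⟪v, (ω:E3)⟫ • (ω:E3)) j = ⟪v, (ω:E3)⟫ * (ω:E3) j from rfl]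
    rw [show (v - ⟪v, (ω:E3)⟫ • (ω:E3)) i = v i - ⟪v, (ω:E3)⟫ * (ω:E3) i from rfl]
    rw [hvω, ← hinner]
  -- Step B : to the ball
  have stepB : ∫ ω : Metric.sphere (0:E3) 1, W0 ω ∂sphereMeasure
      = 3 * ∫ x in Metric.ball (0:E3) 1, W0 x :=
    Stmt7Aux.sphere_to_ball W0 hW0m hW0hom
  -- Step C : rotate
  have hpre : ⇑e ⁻¹' (Metric.ball (0:E3) 1) = Metric.ball (0:E3) 1 := by
    ext x
    simp [mem_ball_zero_iff, e.norm_map]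
  have hWfe : ∀ x, W0 (e x) = Wf x := by
    intro x
    rw [hW0_def, hWf_def]
    dsimp only
    have h1 : ⟪e x, u⟫ = x 2 := by rw [← heu, e.inner_map_map, hcoord]
    have h2 : ∀ k : Fin 3, (e x) k = ⟪x, w k⟫ := by
      intro k
      rw [← hcoord (e x) k, hadj, hw_def]
    rw [e.norm_map, h1, h2 i, h2 j]
  have stepC : ∫ x in Metric.ball (0:E3) 1, W0 x = ∫ x in Metric.ball (0:E3) 1, Wf x := by
    have h := (e.measurePreserving).setIntegral_preimage_emb
      (e.toHomeomorph.measurableEmbedding) W0 (Metric.ball (0:E3) 1)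
    rw [hpre] at h
    rw [← h]
    refine setIntegral_congr_fun measurableSet_ball fun x _ => ?_
    exact hWfe x
  -- Step D : to spherical coordinates
  have stepD : ∫ x in Metric.ball (0:E3) 1, Wf x
      = (1/3) * ∫ θ in (-Real.pi)..Real.pi, ∫ φ in (0:ℝ)..Real.pi,
          Real.sin φ * Wf (Stmt7Aux.sphv θ φ) :=
    Stmt7Aux.ball_to_spherical Wf hWfm CW hWfbd hWfhom
  rw [stepA, stepB, stepC, stepD]
  -- name the coordinates of w i, w j
  set a0 : ℝ := w i 0 with ha0_def
  set a1 : ℝ := w i 1 with ha1_def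
  set a2 : ℝ := w i 2 with ha2_def
  set b0 : ℝ := w j 0 with hb0_def
  set b1 : ℝ := w j 1 with hb1_def
  set b2 : ℝ := w j 2 with hb2_def
  -- the 1-dimensional integrals
  set J1 : ℝ := ∫ t in (-1:ℝ)..1, Bc t * (t * Real.sqrt (1 - t^2)) with hJ1_def
  set J2 : ℝ := ∫ t in (-1:ℝ)..1, Bc t * t^2 with hJ2_def
  set J3 : ℝ := ∫ t in (-1:ℝ)..1, Bc t * (t^2 * Real.sqrt (1 - t^2)^2) with hJ3_def
  set J4 : ℝ := ∫ t in (-1:ℝ)..1, Bc t * (t^3 * Real.sqrt (1 - t^2)) with hJ4_def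
  set J5 : ℝ := ∫ t in (-1:ℝ)..1, Bc t * t^4 with hJ5_def
  set Jb : ℝ := ∫ x in (-1:ℝ)..1, B x * (x^2 * (1 - x^2)) with hJb_def
  have inner3 : ∀ x y : E3, ⟪x, y⟫ = x 0 * y 0 + x 1 * y 1 + x 2 * y 2 := by
    intro x y
    rw [PiLp.inner_apply, Fin.sum_univ_three]
    norm_num [RCLike.inner_apply]
    ring
  have hWf_sphv : ∀ θ φ, Wf (Stmt7Aux.sphv θ φ)
      = Bc (Real.cos φ) * ((v i - (V * Real.cos φ) * (Real.sin φ * Real.cos θ * a0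
          + Real.sin φ * Real.sin θ * a1 + Real.cos φ * a2))
        * ((V * Real.cos φ) * (Real.sin φ * Real.cos θ * b0
          + Real.sin φ * Real.sin θ * b1 + Real.cos φ * b2))) := by
    intro θ φ
    rw [hWf_def]
    dsimp only
    rw [Stmt7Aux.norm_sphv, div_one, div_one, div_one]
    rw [inner3 (Stmt7Aux.sphv θ φ) (w i), inner3 (Stmt7Aux.sphv θ φ) (w j)]
    rw [show Stmt7Aux.sphv θ φ 0 = Real.sin φ * Real.cos θ from rfl,
      show Stmt7Aux.sphv θ φ 1 = Real.sin φ * Real.sin θ from rfl,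
      show Stmt7Aux.sphv θ φ 2 = Real.cos φ from rfl]
  -- the substituted kernel
  set H : ℝ → ℝ → ℝ := fun θ t =>
    Bc t * ((v i - (V * t) * (Real.sqrt (1 - t^2) * Real.cos θ * a0
        + Real.sqrt (1 - t^2) * Real.sin θ * a1 + t * a2))
      * ((V * t) * (Real.sqrt (1 - t^2) * Real.cos θ * b0
        + Real.sqrt (1 - t^2) * Real.sin θ * b1 + t * b2))) with hH_def
  have hsq_cont : Continuous (fun t : ℝ => Real.sqrt (1 - t^2)) :=
    Real.continuous_sqrt.comp (by fun_prop)
  have hH_cont : ∀ θ, Continuous (H θ) := by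
    intro θ
    rw [hH_def]
    have hsuma : Continuous (fun t : ℝ => Real.sqrt (1 - t^2) * Real.cos θ * a0
        + Real.sqrt (1 - t^2) * Real.sin θ * a1 + t * a2) :=
      (((hsq_cont.mul continuous_const).mul continuous_const).add
        ((hsq_cont.mul continuous_const).mul continuous_const)).add
        (continuous_id.mul continuous_const)
    have hsumb : Continuous (fun t : ℝ => Real.sqrt (1 - t^2) * Real.cos θ * b0
        + Real.sqrt (1 - t^2) * Real.sin θ * b1 + t * b2) :=
      (((hsq_cont.mul continuous_const).mul continuous_const).add
        ((hsq_cont.mul continuous_const).mul continuous_const)).add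
        (continuous_id.mul continuous_const)
    exact hBc_cont.mul ((continuous_const.sub
      ((continuous_const.mul continuous_id).mul hsuma)).mul
      ((continuous_const.mul continuous_id).mul hsumb))
  have hsubst : ∀ θ, (∫ φ in (0:ℝ)..Real.pi, Real.sin φ * Wf (Stmt7Aux.sphv θ φ))
      = ∫ t in (-1:ℝ)..1, H θ t := by
    intro θ
    rw [← Stmt7Aux.cos_substitution (H θ) (hH_cont θ)]
    refine intervalIntegral.integral_congr fun φ hφ => ?_
    have hmem := hφ
    rw [Set.uIcc_of_le Real.pi_pos.le] at hmem
    have hsin : Real.sqrt (1 - Real.cos φ^2) = Real.sin φ :=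
      (Real.sin_eq_sqrt_one_sub_cos_sq hmem.1 hmem.2).symm
    rw [hWf_sphv θ φ, hH_def]
    dsimp only
    rw [hsin]
  have hinner_eval : ∀ θ, (∫ t in (-1:ℝ)..1, H θ t)
      = (v i * V * b0 * J1 - V^2 * (a0*b2 + a2*b0) * J4) * Real.cos θ
        + (v i * V * b1 * J1 - V^2 * (a1*b2 + a2*b1) * J4) * Real.sin θ
        + (v i * V * b2 * J2 - V^2 * (a2*b2) * J5)
        + (-(V^2 * (a0*b0)) * J3) * Real.cos θ^2
        + (-(V^2 * (a0*b1 + a1*b0)) * J3) * (Real.sin θ * Real.cos θ)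
        + (-(V^2 * (a1*b1)) * J3) * Real.sin θ^2 := by
    intro θ
    have hpt : ∀ t ∈ Set.uIcc (-1:ℝ) 1, H θ t =
        (v i * V * b0 * Real.cos θ) * (Bc t * (t * Real.sqrt (1 - t^2)))
        + (v i * V * b1 * Real.sin θ) * (Bc t * (t * Real.sqrt (1 - t^2)))
        + (v i * V * b2) * (Bc t * t^2)
        + (-(V^2 * (a0*b0) * Real.cos θ^2)) * (Bc t * (t^2 * Real.sqrt (1 - t^2)^2))
        + (-(V^2 * (a0*b1 + a1*b0) * (Real.sin θ * Real.cos θ)))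
            * (Bc t * (t^2 * Real.sqrt (1 - t^2)^2))
        + (-(V^2 * (a1*b1) * Real.sin θ^2)) * (Bc t * (t^2 * Real.sqrt (1 - t^2)^2))
        + (-(V^2 * (a0*b2 + a2*b0) * Real.cos θ)) * (Bc t * (t^3 * Real.sqrt (1 - t^2)))
        + (-(V^2 * (a1*b2 + a2*b1) * Real.sin θ)) * (Bc t * (t^3 * Real.sqrt (1 - t^2)))
        + (-(V^2 * (a2*b2))) * (Bc t * t^4) := by
      intro t _
      rw [hH_def]
      dsimp only
      ring
    rw [intervalIntegral.integral_congr hpt, Stmt7Aux.t_expand Bc hBc_cont]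
    rw [← hJ1_def, ← hJ2_def, ← hJ3_def, ← hJ4_def, ← hJ5_def]
    ring
  have houter : (∫ θ in (-Real.pi)..Real.pi, ∫ φ in (0:ℝ)..Real.pi,
        Real.sin φ * Wf (Stmt7Aux.sphv θ φ))
      = (v i * V * b2 * J2 - V^2 * (a2*b2) * J5) * (2*Real.pi)
        + (-(V^2 * (a0*b0)) * J3) * Real.pi + (-(V^2 * (a1*b1)) * J3) * Real.pi := by
    have h1 : ∀ θ ∈ Set.uIcc (-Real.pi) Real.pi,
        (∫ φ in (0:ℝ)..Real.pi, Real.sin φ * Wf (Stmt7Aux.sphv θ φ))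
        = (v i * V * b0 * J1 - V^2 * (a0*b2 + a2*b0) * J4) * Real.cos θ
          + (v i * V * b1 * J1 - V^2 * (a1*b2 + a2*b1) * J4) * Real.sin θ
          + (v i * V * b2 * J2 - V^2 * (a2*b2) * J5)
          + (-(V^2 * (a0*b0)) * J3) * Real.cos θ^2
          + (-(V^2 * (a0*b1 + a1*b0)) * J3) * (Real.sin θ * Real.cos θ)
          + (-(V^2 * (a1*b1)) * J3) * Real.sin θ^2 :=
      fun θ _ => by rw [hsubst θ, hinner_eval θ]
    rw [intervalIntegral.integral_congr h1, Stmt7Aux.theta_integral]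
  rw [houter]
  -- evaluate the t-integrals
  have hIcc : ∀ t : ℝ, t ∈ Set.uIcc (-1:ℝ) 1 → t ∈ Set.Icc (-1:ℝ) 1 := by
    intro t ht
    rwa [Set.uIcc_of_le (by norm_num : (-1:ℝ) ≤ 1)] at ht
  have hJ3b : J3 = Jb := by
    rw [hJ3_def, hJb_def]
    refine intervalIntegral.integral_congr fun t ht => ?_
    have h1 := hIcc t ht
    rw [Real.sq_sqrt (by nlinarith [h1.1, h1.2] : (0:ℝ) ≤ 1 - t^2), hBc_eq t h1]
  have hJ25 : J2 - J5 = Jb := by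
    rw [hJ2_def, hJ5_def, hJb_def, ← intervalIntegral.integral_sub (f := fun t => Bc t * t^2) (g := fun t => Bc t * t^4)
      ((hBc_cont.mul (by fun_prop)).intervalIntegrable _ _)
      ((hBc_cont.mul (by fun_prop)).intervalIntegrable _ _)]
    refine intervalIntegral.integral_congr fun t ht => ?_
    rw [hBc_eq t (hIcc t ht)]
    ring
  -- algebraic identities
  have hVu : ∀ k : Fin 3, V * u k = v k := by
    intro k
    rw [hu_def]
    rw [show (‖v‖⁻¹ • v) k = ‖v‖⁻¹ * v k from rfl, ← hV_def]
    field_simp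
  have hVa2 : V * a2 = v i := by rw [ha2_def, hw2 i]; exact hVu i
  have hVb2 : V * b2 = v j := by rw [hb2_def, hw2 j]; exact hVu j
  have horth_ij : a0 * b0 + a1 * b1 + a2 * b2 = if i = j then (1:ℝ) else 0 := hworth i j
  rw [hJ3b, hb, ← hVa2, ← hVb2]
  by_cases hij : i = j
  · rw [if_pos hij]
    rw [if_pos hij] at horth_ij
    linear_combination (2 * Real.pi * V^2 * a2 * b2) * hJ25
      + (-(Real.pi * V^2 * Jb)) * horth_ij
  · rw [if_neg hij]
    rw [if_neg hij] at horth_ij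
    linear_combination (2 * Real.pi * V^2 * a2 * b2) * hJ25
      + (-(Real.pi * V^2 * Jb)) * horth_ij

end
end

section
/- For any K ≠ 0 and b > 0, the cubic equation λ³ = λ² + K²/(6b²) has exactly one real root λ₁, and it satisfies λ₁ > 1; the other two roots λ₂, λ₃ are complex conjugates with Re(λ₂) = Re(λ₃) = (1 − λ₁)/2 < 0. -/
/-! Write `c = K²/(6b²) > 0`. A real root `x` of `x³ = x² + c` satisfies `x²(x - 1) = c > 0`,
so `x > 1`; one exists by the intermediate value theorem on `[1, 1 + c]`. Subtracting the
equations for two roots `z, w` gives `(z - w)(z² + (w - 1)z + w² - w) = 0`. For real roots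
`> 1` the quadratic factor is positive, so the real root is unique. A complex root `z ≠ λ₁`
is then nonreal and a root of the quadratic factor, whose imaginary part
`Im z · (2 Re z + λ₁ - 1)` vanishes, so `Re z = (1 - λ₁)/2`. -/

open ComplexConjugate

lemma sub_mul_quadratic_eq_zero_of_pow_three_eq {R : Type*} [CommRing R] {c z w : R}
    (hz : z ^ 3 = z ^ 2 + c) (hw : w ^ 3 = w ^ 2 + c) :
    (z - w) * (z ^ 2 + (w - 1) * z + (w ^ 2 - w)) = 0 := by
  linear_combination hz - hw

namespace CubicPowThreeEqSqAdd

variable {c : ℝ}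

lemma one_lt_of_pow_three_eq (hc : 0 < c) {x : ℝ} (hx : x ^ 3 = x ^ 2 + c) : 1 < x := by
  by_contra! h
  nlinarith [mul_nonpos_of_nonneg_of_nonpos (sq_nonneg x) (sub_nonpos.mpr h)]

lemma exists_pow_three_eq (hc : 0 ≤ c) : ∃ x : ℝ, x ^ 3 = x ^ 2 + c := by
  have hcont : ContinuousOn (fun x : ℝ => x ^ 3 - x ^ 2) (Set.Icc 1 (1 + c)) := by fun_prop
  have hc_mem : c ∈ Set.Icc ((1 : ℝ) ^ 3 - 1 ^ 2) ((1 + c) ^ 3 - (1 + c) ^ 2) := by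
    constructor <;> nlinarith [mul_nonneg hc (mul_nonneg hc hc)]
  obtain ⟨x, -, hx⟩ := intermediate_value_Icc (by linarith) hcont hc_mem
  exact ⟨x, by linear_combination hx⟩

lemma eq_of_pow_three_eq (hc : 0 < c) {x y : ℝ} (hx : x ^ 3 = x ^ 2 + c)
    (hy : y ^ 3 = y ^ 2 + c) : x = y := by
  have hx1 := one_lt_of_pow_three_eq hc hx
  have hy1 := one_lt_of_pow_three_eq hc hy
  have hfactor : 0 < x ^ 2 + (y - 1) * x + (y ^ 2 - y) := by
    nlinarith [mul_pos (by linarith : (0 : ℝ) < x) (by linarith : (0 : ℝ) < y)]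
  have hprod := mul_eq_zero.mp (sub_mul_quadratic_eq_zero_of_pow_three_eq hx hy)
  exact sub_eq_zero.mp (hprod.resolve_right hfactor.ne')

lemma complex_root_im_ne_zero_and_re (hc : 0 < c) {lam : ℝ} (hlam : lam ^ 3 = lam ^ 2 + c)
    {z : ℂ} (hz : z ^ 3 = z ^ 2 + c) (hne : z ≠ lam) :
    z.im ≠ 0 ∧ z.re = (1 - lam) / 2 := by
  have him : z.im ≠ 0 := by
    intro him
    have hz_re : z = (z.re : ℂ) := Complex.ext rfl (by simp [him])
    have hre : z.re ^ 3 = z.re ^ 2 + c := by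
      rw [hz_re] at hz
      exact_mod_cast hz
    exact hne (by rw [hz_re, eq_of_pow_three_eq hc hre hlam])
  have hquad : z ^ 2 + ((lam : ℂ) - 1) * z + ((lam : ℂ) ^ 2 - lam) = 0 := by
    have hlamC : (lam : ℂ) ^ 3 = (lam : ℂ) ^ 2 + c := by exact_mod_cast congrArg Complex.ofReal hlam
    have hprod := mul_eq_zero.mp (sub_mul_quadratic_eq_zero_of_pow_three_eq hz hlamC)
    exact hprod.resolve_left (sub_ne_zero.mpr hne)
  have him_quad : z.im * (2 * z.re + (lam - 1)) = 0 := by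
    have := congrArg Complex.im hquad
    simp only [pow_two, Complex.add_im, Complex.mul_im, Complex.sub_im, Complex.ofReal_im,
      Complex.ofReal_re, Complex.sub_re, Complex.one_re, Complex.one_im, Complex.zero_im] at this
    linear_combination this
  refine ⟨him, ?_⟩
  linarith [(mul_eq_zero.mp him_quad).resolve_left him]

end CubicPowThreeEqSqAdd

open CubicPowThreeEqSqAdd in
/-- for `K ≠ 0`, `b > 0`, the cubic `λ³ = λ² + K²/(6b²)` has a
unique real root `λ₁`, which satisfies `λ₁ > 1`; every other complex root `z`
is nonreal, has `Re z = (1 − λ₁)/2 < 0`, and its conjugate is also a root. -/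
theorem stmt8 (K b : ℝ) (hK : K ≠ 0) (hb : 0 < b) :
    ∃ lam1 : ℝ, lam1 > 1 ∧ lam1 ^ 3 = lam1 ^ 2 + K ^ 2 / (6 * b ^ 2) ∧
      (∀ x : ℝ, x ^ 3 = x ^ 2 + K ^ 2 / (6 * b ^ 2) → x = lam1) ∧
      (∀ z : ℂ, z ^ 3 = z ^ 2 + (K : ℂ) ^ 2 / (6 * (b : ℂ) ^ 2) → z ≠ (lam1 : ℂ) →
        z.im ≠ 0 ∧ z.re = (1 - lam1) / 2 ∧ z.re < 0 ∧
        (starRingEnd ℂ z) ^ 3 = (starRingEnd ℂ z) ^ 2 + (K : ℂ) ^ 2 / (6 * (b : ℂ) ^ 2)) := by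
  set c : ℝ := K ^ 2 / (6 * b ^ 2)
  have hc : 0 < c := by positivity
  have hcC : (K : ℂ) ^ 2 / (6 * (b : ℂ) ^ 2) = (c : ℂ) := by simp only [c]; push_cast; rfl
  obtain ⟨lam1, hlam1⟩ := exists_pow_three_eq hc.le
  have hgt := one_lt_of_pow_three_eq hc hlam1
  refine ⟨lam1, hgt, hlam1, fun x hx => eq_of_pow_three_eq hc hx hlam1, ?_⟩
  intro z hz hne
  rw [hcC] at hz ⊢
  obtain ⟨him, hre⟩ := complex_root_im_ne_zero_and_re hc hlam1 hz hne
  refine ⟨him, hre, by rw [hre]; linarith, ?_⟩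
  simpa only [map_pow, map_add, Complex.conj_ofReal] using congrArg conj hz
end

section
/- Fix b > 0, K ∈ ℝ, and let λ₁ > 1 be the real root of λ³ = λ² + K²/(6b²). Then the symmetric matrix W̄₀ = [[1, −K/(2bλ₁), 0], [−K/(2bλ₁), 3λ₁−2, 0], [0, 0, 1]] is positive definite; in particular its determinant equals (3/λ₁²)(λ₁²/3 + K²/(12b²)) > 0. -/
/-!
Writing `c = K / (2 b λ₁)`, the cubic for `λ₁` says exactly `c² = 3 (λ₁ - 1) / 2`. The matrix is
then block diagonal with the `2 × 2` block `[[1, -c], [-c, 3λ₁ - 2]]`, whose determinant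
`3λ₁ - 2 - c² = (3λ₁ - 1) / 2` is positive, and both sides of the determinant formula equal `1 + c²`.
-/

open Matrix

theorem Matrix.posDef_fin_three_of_block_diag {a β d e : ℝ} (ha : 0 < a) (hβ : β ^ 2 < a * d)
    (he : 0 < e) : (!![a, β, 0; β, d, 0; 0, 0, e] : Matrix (Fin 3) (Fin 3) ℝ).PosDef := by
  refine PosDef.of_dotProduct_mulVec_pos ?_ fun x hx => ?_
  · ext i j
    fin_cases i <;> fin_cases j <;> simp
  · simp only [star_trivial, mulVec, dotProduct, Fin.sum_univ_three, of_apply, cons_val',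
      cons_val_zero, cons_val_one, cons_val_two, empty_val', cons_val_fin_one, head_cons,
      tail_cons, head_fin_const]
    refine pos_of_mul_pos_right (a := a) ?_ ha.le
    have hsq : a * (x 0 * (a * x 0 + β * x 1 + 0 * x 2) + x 1 * (β * x 0 + d * x 1 + 0 * x 2)
        + x 2 * (0 * x 0 + 0 * x 1 + e * x 2))
        = (a * x 0 + β * x 1) ^ 2 + (a * d - β ^ 2) * x 1 ^ 2 + a * e * x 2 ^ 2 := by ring
    rw [hsq]
    have hd : 0 < a * d - β ^ 2 := by linarith
    have hae : 0 < a * e := mul_pos ha he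
    have hx' : x 0 ≠ 0 ∨ x 1 ≠ 0 ∨ x 2 ≠ 0 := by
      by_contra! h
      exact hx (funext fun i => by fin_cases i <;> simp [h])
    rcases hx' with h | h | h
    · rcases eq_or_ne (x 1) 0 with h1 | h1
      · have : 0 < (a * x 0) ^ 2 := by positivity
        simp only [h1]
        nlinarith [sq_nonneg (x 2)]
      · have : 0 < (a * d - β ^ 2) * x 1 ^ 2 := by positivity
        nlinarith [sq_nonneg (a * x 0 + β * x 1), sq_nonneg (x 2)]
    · have : 0 < (a * d - β ^ 2) * x 1 ^ 2 := by positivity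
      nlinarith [sq_nonneg (a * x 0 + β * x 1), sq_nonneg (x 2)]
    · have : 0 < a * e * x 2 ^ 2 := by positivity
      nlinarith [sq_nonneg (a * x 0 + β * x 1), sq_nonneg (x 1)]

/-- positive definiteness of the quadratic form `W̄₀` used in the
shear-adapted Povzner estimate, together with the determinant formula. -/
theorem stmt10 (b K : ℝ) (hb : 0 < b) (lam1 : ℝ)
    (hlam1 : lam1 > 1) (hroot : lam1 ^ 3 = lam1 ^ 2 + K ^ 2 / (6 * b ^ 2))
    (W0 : Matrix (Fin 3) (Fin 3) ℝ)
    (hW0 : W0 = !![1, -K / (2 * b * lam1), 0;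
                   -K / (2 * b * lam1), 3 * lam1 - 2, 0;
                   0, 0, 1]) :
    W0.PosDef ∧
    W0.det = 3 / lam1 ^ 2 * (lam1 ^ 2 / 3 + K ^ 2 / (12 * b ^ 2)) ∧
    0 < W0.det := by
  have hlam0 : lam1 ≠ 0 := by positivity
  have hK : K ^ 2 = 6 * b ^ 2 * lam1 ^ 2 * (lam1 - 1) := by
    field_simp at hroot
    linear_combination -hroot
  have hc : (-K / (2 * b * lam1)) ^ 2 = 3 / 2 * (lam1 - 1) := by
    rw [div_pow, neg_sq, hK]
    field_simp
    ring
  have hpos : W0.PosDef :=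
    hW0 ▸ posDef_fin_three_of_block_diag one_pos (by rw [hc]; linarith) one_pos
  have hdet : W0.det = 3 / lam1 ^ 2 * (lam1 ^ 2 / 3 + K ^ 2 / (12 * b ^ 2)) := by
    rw [hW0, det_fin_three]
    simp only [of_apply, cons_val', cons_val_zero, cons_val_one, cons_val_two, empty_val',
      cons_val_fin_one, head_cons, tail_cons, head_fin_const]
    field_simp
    rw [hK]
    ring
  exact ⟨hpos, hdet, hpos.det_pos⟩
end

section
/- Define β(b) = b·½[−(1/b + 1) + √((1/b − 1)² + (8/3)(1/b))] for b > 0. Then β(b) < 0 for every b > 0, β is a decreasing function of b, and β(b) → −1/3 as b → ∞. -/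
/-!
Substituting `x = 1/b` and rationalizing the numerator,
`(√D - (x + 1)) (√D + (x + 1)) = D - (x + 1)² = -4x/3` for `D = (x - 1)² + 8x/3 = x² + 2x/3 + 1`,
gives `β(b) = -2 / (3 (√(x² + 2x/3 + 1) + x + 1))`. The denominator is positive and strictly
increasing in `x ≥ 0`, so this is negative and increasing in `x`, hence decreasing in `b`;
as `b → ∞`, `x → 0` and the value tends to `-2/6`.
-/

open Filter Set Topology

noncomputable def betaRecip (x : ℝ) : ℝ :=
  -2 / (3 * (√(x ^ 2 + 2 / 3 * x + 1) + x + 1))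

lemma mul_root_eq_betaRecip_inv {b : ℝ} (hb : 0 < b) :
    b * ((-(1 / b + 1) + √((1 / b - 1) ^ 2 + 8 / 3 * (1 / b))) / 2) = betaRecip b⁻¹ := by
  obtain ⟨x, hx, rfl⟩ : ∃ x, 0 < x ∧ b = x⁻¹ := ⟨b⁻¹, inv_pos.mpr hb, (inv_inv b).symm⟩
  have hD : (x - 1) ^ 2 + 8 / 3 * x = x ^ 2 + 2 / 3 * x + 1 := by ring
  have hsq : √(x ^ 2 + 2 / 3 * x + 1) ^ 2 = x ^ 2 + 2 / 3 * x + 1 := Real.sq_sqrt (by positivity)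
  have hden : 0 < √(x ^ 2 + 2 / 3 * x + 1) + x + 1 := by positivity
  rw [inv_inv, one_div, inv_inv, hD, betaRecip]
  generalize √(x ^ 2 + 2 / 3 * x + 1) = s at hsq hden
  field_simp
  nlinarith [hsq]

lemma betaRecip_neg {x : ℝ} (hx : 0 ≤ x) : betaRecip x < 0 :=
  div_neg_of_neg_of_pos (by norm_num) (by positivity)

lemma strictMonoOn_betaRecip : StrictMonoOn betaRecip (Ici 0) := by
  intro x (hx : 0 ≤ x) y (hy : 0 ≤ y) hxy
  have hroot : √(x ^ 2 + 2 / 3 * x + 1) < √(y ^ 2 + 2 / 3 * y + 1) :=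
    Real.sqrt_lt_sqrt (by positivity) (by nlinarith)
  rw [betaRecip, betaRecip, neg_div, neg_div, neg_lt_neg_iff]
  exact div_lt_div_of_pos_left two_pos (by positivity) (by linarith)

lemma tendsto_betaRecip_zero : Tendsto betaRecip (𝓝 0) (𝓝 (-1 / 3)) := by
  have hcont : ContinuousAt betaRecip 0 :=
    continuousAt_const.div (by fun_prop) (by norm_num)
  convert hcont.tendsto using 2
  norm_num [betaRecip]

/-- the self-similar exponent
`β(b) = b·½[−(1/b + 1) + √((1/b − 1)² + (8/3)(1/b))]` is negative for every
`b > 0`, is a decreasing function of `b`, and tends to `−1/3` as `b → ∞`. -/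
theorem stmt16 (β : ℝ → ℝ)
    (hβ : ∀ b : ℝ, 0 < b → β b =
      b * ((-(1 / b + 1) + Real.sqrt ((1 / b - 1) ^ 2 + 8 / 3 * (1 / b))) / 2)) :
    (∀ b : ℝ, 0 < b → β b < 0) ∧
    StrictAntiOn β (Set.Ioi 0) ∧
    Tendsto β atTop (nhds (-1 / 3)) := by
  have hβ' : EqOn (betaRecip ∘ (·⁻¹)) β (Ioi 0) := fun b hb =>
    (hβ b hb ▸ mul_root_eq_betaRecip_inv hb).symm
  refine ⟨fun b hb => hβ' hb ▸ betaRecip_neg (inv_nonneg.mpr hb.le), ?_, ?_⟩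
  · exact (strictMonoOn_betaRecip.comp_strictAntiOn strictAntiOn_inv_pos
      fun b (hb : 0 < b) => inv_nonneg.mpr hb.le).congr hβ'
  · refine (tendsto_betaRecip_zero.comp tendsto_inv_atTop_zero).congr' ?_
    filter_upwards [eventually_gt_atTop 0] with b hb using hβ' hb
end
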